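/- arXiv:math/9806057 — 3 statements merged into one kernel-verified Lean document; each statement's English description precedes it below -/
import Mathlib

section
/- If a finite ranked poset P of rank n with 0̂ and 1̂ has an S-labeling Λ of its maximal chains, then the action of the symmetric group S_n on the label sequences by permuting coordinates induces a well-defined local permutation action of S_n on the set of maximal chains of P: each adjacent transposition σ_i sends a maximal chain c to the unique maximal chain c' (possibly c itself) differing from c at most at rank i, with Λ(c') = σ_i·Λ(c). -/
open MvPolynomial

section AbstractPoset

variable {P : Type*} [PartialOrder P] [BoundedOrder P]

/-- A maximal chain of length `n` in a bounded poset `P`: a saturated chain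
`⊥ = c 0 ⋖ c 1 ⋖ ⋯ ⋖ c n = ⊤`. -/
def IsMaxChainOf (n : ℕ) (c : Fin (n + 1) → P) : Prop :=
  c 0 = ⊥ ∧ c (Fin.last n) = ⊤ ∧ ∀ i : Fin n, c i.castSucc ⋖ c i.succ

/-- `ρ` is a rank function exhibiting `P` as a ranked poset of rank `n`. -/
def IsRankFunction (n : ℕ) (ρ : P → ℕ) : Prop :=
  ρ ⊥ = 0 ∧ ρ ⊤ = n ∧ (∀ a b : P, a ⋖ b → ρ b = ρ a + 1) ∧ ∀ x : P, ρ x ≤ n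

variable {L : Type*} [LinearOrder L] {n : ℕ}

/-- A `C`-labeling: the label of the `r`-th step of a maximal chain depends only on the
initial subchain up to rank `r`. -/
def IsCLabeling (Λ : {c : Fin (n + 1) → P // IsMaxChainOf n c} → Fin n → L) : Prop :=
  ∀ c c' : {c : Fin (n + 1) → P // IsMaxChainOf n c}, ∀ r : Fin (n + 1),
    (∀ s : Fin (n + 1), s ≤ r → c.1 s = c'.1 s) →
      ∀ s : Fin n, (s : ℕ) < (r : ℕ) → Λ c s = Λ c' s

/-- An `S`-labeling: `Λ` is injective, and for every maximal chain `c` and every rank `i`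
(`1 ≤ i ≤ n-1`, encoded by `i+1` with `i+1 < n` below being the 0-indexed positions `i`,
`i+1` of the two labels) at which consecutive labels differ, there is a unique maximal
chain `c'` differing from `c` only at rank `i` whose label sequence is that of `c` with
these two labels interchanged. -/
def IsSLabeling (Λ : {c : Fin (n + 1) → P // IsMaxChainOf n c} → Fin n → L) : Prop :=
  Function.Injective Λ ∧
    ∀ (c : {c : Fin (n + 1) → P // IsMaxChainOf n c}) (i : ℕ) (h : i + 1 < n),
      Λ c ⟨i, by omega⟩ ≠ Λ c ⟨i + 1, h⟩ →
        ∃! c' : {c : Fin (n + 1) → P // IsMaxChainOf n c},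
          (∀ r : Fin (n + 1), (r : ℕ) ≠ i + 1 → c'.1 r = c.1 r) ∧
            Λ c' = Λ c ∘ Equiv.swap (⟨i, by omega⟩ : Fin n) ⟨i + 1, h⟩

/-- An `R`-labeling (for the relation `rel = (· ≤ ·)`), resp. an `R*`-labeling (for
`rel = (· < ·)`): every partial chain `⊥ = w⁰ ⋖ ⋯ ⋖ w^r ≤ u` has a completion by covering
relations from `w^r` to `u` whose labels are weakly (resp. strictly) increasing, and this
completion is unique up to rank `ρ u`. -/
def IsRelLabeling (ρ : P → ℕ) (Λ : {c : Fin (n + 1) → P // IsMaxChainOf n c} → Fin n → L)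
    (rel : L → L → Prop) : Prop :=
  ∀ (c : {c : Fin (n + 1) → P // IsMaxChainOf n c}) (r : Fin (n + 1)) (u : P),
    c.1 r ≤ u →
      ∃ c' : {c : Fin (n + 1) → P // IsMaxChainOf n c},
        ((∀ s : Fin (n + 1), s ≤ r → c'.1 s = c.1 s) ∧
          (∀ s : Fin (n + 1), (s : ℕ) = ρ u → c'.1 s = u) ∧
          (∀ (s : ℕ) (h1 : s < n) (h2 : s + 1 < n), (r : ℕ) ≤ s → s + 2 ≤ ρ u →
            rel (Λ c' ⟨s, h1⟩) (Λ c' ⟨s + 1, h2⟩))) ∧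
        ∀ c'' : {c : Fin (n + 1) → P // IsMaxChainOf n c},
          ((∀ s : Fin (n + 1), s ≤ r → c''.1 s = c.1 s) ∧
            (∀ s : Fin (n + 1), (s : ℕ) = ρ u → c''.1 s = u) ∧
            (∀ (s : ℕ) (h1 : s < n) (h2 : s + 1 < n), (r : ℕ) ≤ s → s + 2 ≤ ρ u →
              rel (Λ c'' ⟨s, h1⟩) (Λ c'' ⟨s + 1, h2⟩))) →
          ∀ s : Fin (n + 1), (s : ℕ) ≤ ρ u → c''.1 s = c'.1 s

/-- A local action of `S_n` on the maximal chains of `P`: a group action (given by a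
homomorphism into the permutations of the set of maximal chains) in which each adjacent
transposition `σ_i = (i, i+1)` moves each maximal chain at most at the element of rank `i`. -/
def IsLocalAction
    (φ : Equiv.Perm (Fin n) →* Equiv.Perm {c : Fin (n + 1) → P // IsMaxChainOf n c}) : Prop :=
  ∀ (i : ℕ) (h : i + 1 < n) (c : {c : Fin (n + 1) → P // IsMaxChainOf n c})
    (r : Fin (n + 1)), (r : ℕ) ≠ i + 1 →
      (φ (Equiv.swap (⟨i, by omega⟩ : Fin n) ⟨i + 1, h⟩) c).1 r = c.1 r

/-- The stabilizer of the maximal chain `c` under the action `φ` is the Young subgroup of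
`S_n` associated with the set partition `Q` of `[n]`. -/
def IsYoungStabilizer
    (φ : Equiv.Perm (Fin n) →* Equiv.Perm {c : Fin (n + 1) → P // IsMaxChainOf n c})
    (c : {c : Fin (n + 1) → P // IsMaxChainOf n c})
    (Q : Finpartition (Finset.univ : Finset (Fin n))) : Prop :=
  ∀ σ : Equiv.Perm (Fin n), φ σ c = c ↔ ∀ B ∈ Q.parts, ∀ a ∈ B, σ a ∈ B

/-- The Frobenius characteristic `ch(ψ) = (1/n!) Σ_σ ψ(σ) p_{cycletype(σ)}` of the character
`ψ` of the permutation action `φ` of `S_n` on the maximal chains of `P` (`ψ(σ)` is the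
number of fixed maximal chains of `σ`), expressed as a symmetric polynomial in `d`
variables. -/
noncomputable def frobeniusCh
    (φ : Equiv.Perm (Fin n) →* Equiv.Perm {c : Fin (n + 1) → P // IsMaxChainOf n c})
    (d : ℕ) : MvPolynomial (Fin d) ℚ :=
  (n.factorial : ℚ)⁻¹ •
    ∑ σ : Equiv.Perm (Fin n),
      (Nat.card {c : {c : Fin (n + 1) → P // IsMaxChainOf n c} // φ σ c = c} : ℚ) •
        ((σ.cycleType.map (psum (Fin d) ℚ)).prod *
          psum (Fin d) ℚ 1 ^ (n - σ.cycleType.sum))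

/-- The flag (quasi)symmetric function of the ranked poset `P` (with rank function `ρ`,
of rank `n`) specialized to `d` variables:
`F_P(x₁,…,x_d) = Σ_{⊥ = t₀ ≤ t₁ ≤ ⋯ ≤ t_d = ⊤} ∏_i x_i^{ρ(t_i) - ρ(t_{i-1})}`. -/
noncomputable def flagPoly (ρ : P → ℕ) (d : ℕ) : MvPolynomial (Fin d) ℚ :=
  ∑ᶠ c ∈ {c : Fin (d + 1) → P | c 0 = ⊥ ∧ c (Fin.last d) = ⊤ ∧ Monotone c},
    ∏ i : Fin d, (X i : MvPolynomial (Fin d) ℚ) ^ (ρ (c i.succ) - ρ (c i.castSucc))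

end AbstractPoset

/-- **Simion–Stanley Theorem 4.1.** If a finite ranked poset `P` of rank `n` with `0̂` and
`1̂` has an `S`-labeling `Λ` of its maximal chains, then the `S_n`-action on label sequences
by permuting coordinates induces a local permutation action of `S_n` on the maximal chains:
there is a homomorphism `φ : S_n → Perm(M(P))` such that each adjacent transposition
`σ_i` sends each maximal chain `c` to the (unique, by injectivity of `Λ`) maximal chain
differing from `c` at most at rank `i` whose label sequence is `σ_i · Λ(c)`. -/
theorem sLabeling_induces_local_action
    {P : Type*} [Fintype P] [PartialOrder P] [BoundedOrder P]
    (n : ℕ) (ρ : P → ℕ) (hρ : IsRankFunction n ρ)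
    {L : Type*} [LinearOrder L]
    (Λ : {c : Fin (n + 1) → P // IsMaxChainOf n c} → Fin n → L)
    (hC : IsCLabeling Λ) (hS : IsSLabeling Λ) :
    ∃ φ : Equiv.Perm (Fin n) →* Equiv.Perm {c : Fin (n + 1) → P // IsMaxChainOf n c},
      IsLocalAction φ ∧
        ∀ (i : ℕ) (h : i + 1 < n) (c : {c : Fin (n + 1) → P // IsMaxChainOf n c}),
          Λ (φ (Equiv.swap (⟨i, by omega⟩ : Fin n) ⟨i + 1, h⟩) c) =
            Λ c ∘ Equiv.swap (⟨i, by omega⟩ : Fin n) ⟨i + 1, h⟩ := by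
  classical
  obtain ⟨hinj, hSw⟩ := hS
  -- existence of a chain with labels Λ c ∘ swap, for each adjacent swap
  have hgen : ∀ (i : ℕ) (h : i + 1 < n) (c : {c : Fin (n + 1) → P // IsMaxChainOf n c}),
      ∃ c' : {c : Fin (n + 1) → P // IsMaxChainOf n c},
        (∀ r : Fin (n + 1), (r : ℕ) ≠ i + 1 → c'.1 r = c.1 r) ∧
        Λ c' = Λ c ∘ Equiv.swap (⟨i, by omega⟩ : Fin n) ⟨i + 1, h⟩ := by
    intro i h c
    by_cases hne : Λ c ⟨i, by omega⟩ = Λ c ⟨i + 1, h⟩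
    · refine ⟨c, fun r _ => rfl, ?_⟩
      funext x
      simp only [Function.comp_apply, Equiv.swap_apply_def]
      split_ifs with h1 h2
      · rw [h1, hne]
      · rw [h2, hne]
      · rfl
    · obtain ⟨c', hc', _⟩ := hSw c i h hne
      exact ⟨c', hc'.1, hc'.2⟩
  -- closure under all permutations
  have hinv : ∀ (σ : Equiv.Perm (Fin n)) (c : {c : Fin (n + 1) → P // IsMaxChainOf n c}),
      ∃ c' : {c : Fin (n + 1) → P // IsMaxChainOf n c}, Λ c' = Λ c ∘ σ := by
    intro σ
    rcases n with _ | m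
    · intro c
      refine ⟨c, ?_⟩
      funext x; exact absurd x.2 (by omega)
    · have hσ : σ ∈ Submonoid.closure
          (Set.range fun i : Fin m ↦ Equiv.swap i.castSucc i.succ) := by
        rw [Equiv.Perm.mclosure_swap_castSucc_succ m]; trivial
      induction hσ using Submonoid.closure_induction with
      | mem σ hσ =>
          obtain ⟨i, rfl⟩ := hσ
          intro c
          have hi : (i : ℕ) + 1 < m + 1 := by omega
          obtain ⟨c', _, hc'⟩ := hgen i hi c
          exact ⟨c', hc'⟩
      | one => intro c; exact ⟨c, rfl⟩
      | mul σ τ _ _ ihσ ihτ =>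
          intro c
          obtain ⟨c1, hc1⟩ := ihσ c
          obtain ⟨c2, hc2⟩ := ihτ c1
          refine ⟨c2, ?_⟩
          rw [hc2, hc1]
          rfl
  choose T hT using hinv
  have key : ∀ (σ τ : Equiv.Perm (Fin n)) (c : {c : Fin (n + 1) → P // IsMaxChainOf n c}),
      T σ (T τ c) = T (τ * σ) c := by
    intro σ τ c
    apply hinj
    rw [hT, hT, hT]
    rfl
  have Tone : ∀ c, T 1 c = c := by
    intro c
    apply hinj
    rw [hT]
    rfl
  let φ' : Equiv.Perm (Fin n) → Equiv.Perm {c : Fin (n + 1) → P // IsMaxChainOf n c} :=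
    fun σ =>
    { toFun := T σ⁻¹
      invFun := T σ
      left_inv := fun c => by rw [key, inv_mul_cancel, Tone]
      right_inv := fun c => by rw [key, mul_inv_cancel, Tone] }
  refine ⟨{ toFun := φ', map_one' := ?_, map_mul' := ?_ }, ?_, ?_⟩
  · refine Equiv.ext fun c => ?_
    show T 1⁻¹ c = c
    rw [inv_one, Tone]
  · intro σ τ
    refine Equiv.ext fun c => ?_
    show T (σ * τ)⁻¹ c = T σ⁻¹ (T τ⁻¹ c)
    rw [key, mul_inv_rev]
  · intro i h c r hr
    obtain ⟨c', hc'loc, hc'lab⟩ := hgen i h c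
    have heq : T (Equiv.swap (⟨i, by omega⟩ : Fin n) ⟨i + 1, h⟩)⁻¹ c = c' := by
      apply hinj
      rw [hT, hc'lab, Equiv.swap_inv]
    show (T (Equiv.swap (⟨i, by omega⟩ : Fin n) ⟨i + 1, h⟩)⁻¹ c).1 r = c.1 r
    rw [heq]
    exact hc'loc r hr
  · intro i h c
    show Λ (T (Equiv.swap (⟨i, by omega⟩ : Fin n) ⟨i + 1, h⟩)⁻¹ c) = _
    rw [hT, Equiv.swap_inv]
end

section
/- Suppose a finite ranked poset P of rank n with 0̂ and 1̂ carries a local action of S_n on its maximal chains. Then for every maximal chain c, the stabilizer of c is a Young subgroup of S_n, i.e., the product S_{B_1} × ... × S_{B_k} over the blocks of some set partition {B_1,...,B_k} of [n]. -/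
open MvPolynomial

/-!
Call `a ~ b` when the transposition `(a b)` fixes the maximal chain `c`; as the stabilizer is a
subgroup, this is an equivalence relation. The key point is that whenever `σ` fixes `c`, so does
`(a σ(a))`. Conjugating, we may assume `a = 0` and `σ(a) = 1`, so `σ = (0 1) y` with `y(0) = 0`.
Such a `y` is a product of the adjacent transpositions `(i, i+1)`, `i ≥ 1`, none of which moves
the element of rank `1`; hence `y c` agrees with `c` at rank `1`, and, since `c = (0 1)(y c)` and
`(0 1)` only moves the element of rank `1`, everywhere else as well. So `y c = c`, and `(0 1)`
fixes `c`. Finally, a permutation group closed under `σ ↦ (a σ(a))` consists exactly of the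
permutations preserving the classes of `~`, since any permutation is the product of the
transpositions `(a σ(a))` met while sorting it.
-/

namespace Equiv.Perm

open MulAction Subgroup

variable {α : Type*} [DecidableEq α]

theorem mem_of_forall_swap_apply_mem [Finite α] {H : Subgroup (Perm α)} {σ : Perm α}
    (hσ : ∀ x, swap x (σ x) ∈ H) : σ ∈ H := by
  let S : Set (Perm α) := {τ | τ ∈ H ∧ τ.IsSwap}
  have hS : closure S ≤ H := (closure_le H).mpr fun τ hτ => hτ.1
  refine hS ((mem_closure_isSwap fun τ hτ => hτ.2).mpr ⟨Set.toFinite _, fun x => ?_⟩)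
  by_cases hx : x = σ x
  · exact hx ▸ mem_orbit_self x
  · exact ⟨⟨swap x (σ x), subset_closure ⟨hσ x, x, σ x, hx, rfl⟩⟩, swap_apply_left x (σ x)⟩

def swapSetoid (H : Subgroup (Perm α)) : Setoid α where
  r a b := swap a b ∈ H
  iseqv :=
    { refl := fun a => by rw [swap_self]; exact H.one_mem
      symm := fun h => by rwa [swap_comm]
      trans := SubmonoidClass.swap_mem_trans H }

theorem exists_finpartition_mem_iff_of_swap_apply_mem [Fintype α] (H : Subgroup (Perm α))
    (hH : ∀ σ ∈ H, ∀ a, swap a (σ a) ∈ H) :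
    ∃ Q : Finpartition (Finset.univ : Finset α),
      ∀ σ, σ ∈ H ↔ ∀ B ∈ Q.parts, ∀ a ∈ B, σ a ∈ B := by
  classical
  let Q := Finpartition.ofSetoid (swapSetoid H)
  have hpart : ∀ σ : Perm α, (∀ B ∈ Q.parts, ∀ a ∈ B, σ a ∈ B) ↔ ∀ a, σ a ∈ Q.part a :=
    fun σ => ⟨fun h a => h _ (Q.part_mem.mpr (Finset.mem_univ a)) a
      (Q.mem_part (Finset.mem_univ a)), fun h B hB a ha => Q.part_eq_of_mem hB ha ▸ h a⟩
  refine ⟨Q, fun σ => ?_⟩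
  simp only [hpart, Q, Finpartition.mem_part_ofSetoid_iff_rel]
  exact ⟨hH σ, mem_of_forall_swap_apply_mem⟩

theorem exists_apply_eq_apply_eq {a b x y : α} (hab : a ≠ b) (hxy : x ≠ y) :
    ∃ u : Perm α, u a = x ∧ u b = y := by
  have hb : swap a x b ≠ x := by
    simpa only [swap_apply_left] using (swap a x).injective.ne hab.symm
  refine ⟨swap (swap a x b) y * swap a x, ?_, ?_⟩
  · rw [Perm.mul_apply, swap_apply_left, swap_apply_of_ne_of_ne hb.symm hxy]
  · rw [Perm.mul_apply, swap_apply_left]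

end Equiv.Perm

theorem Fin.swap_mem_of_swap_succ_mem {n : ℕ} (H : Subgroup (Equiv.Perm (Fin n))) {a : ℕ}
    (hH : ∀ i j : Fin n, a ≤ i → (j : ℕ) = i + 1 → Equiv.swap i j ∈ H) {x z : Fin n}
    (hx : a ≤ x) (hxz : x ≤ z) : Equiv.swap x z ∈ H := by
  obtain ⟨k, hk⟩ := Nat.exists_eq_add_of_le (Fin.le_def.mp hxz)
  induction k generalizing z with
  | zero => rw [Fin.ext hk, Equiv.swap_self]; exact H.one_mem
  | succ k ih =>
    let y : Fin n := ⟨x + k, by omega⟩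
    exact SubmonoidClass.swap_mem_trans H (ih (z := y) (Fin.le_def.mpr (by simp [y])) rfl)
      (hH y z (by simp [y]; omega) (by simp [y]; omega))

section LocalAction

open Equiv

variable {P : Type*} [PartialOrder P] [BoundedOrder P] {n : ℕ}
  {φ : Perm (Fin n) →* Perm {c : Fin (n + 1) → P // IsMaxChainOf n c}}

variable (φ) in
def rankFixer (r : Fin (n + 1)) : Subgroup (Perm (Fin n)) where
  carrier := {σ | ∀ m, (φ σ m).1 r = m.1 r}
  one_mem' _ := by simp
  mul_mem' hσ hτ m := by simp only [map_mul, Perm.mul_apply, hσ _, hτ m]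
  inv_mem' {σ} hσ m := by
    simpa only [map_inv, Perm.coe_inv, apply_symm_apply] using (hσ ((φ σ)⁻¹ m)).symm

theorem IsLocalAction.swap_mem_rankFixer (hloc : IsLocalAction φ) {r : Fin (n + 1)}
    {i j : Fin n} (hij : (j : ℕ) = i + 1) (hr : (r : ℕ) ≠ j) :
    swap i j ∈ rankFixer φ r := by
  obtain ⟨i, hi⟩ := i
  obtain ⟨j, hj⟩ := j
  subst hij
  exact fun m => hloc i hj m r hr

/-- The stabilizer of `0` is generated by the adjacent transpositions `(i, i+1)` with `i ≥ 1`,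
none of which moves the element of rank `1`. -/
theorem IsLocalAction.mem_rankFixer_of_apply_eq_self (hloc : IsLocalAction φ)
    {r : Fin (n + 1)} (hr : (r : ℕ) = 1) {p : Fin n} (hp : (p : ℕ) = 0) {σ : Perm (Fin n)}
    (hσ : σ p = p) : σ ∈ rankFixer φ r := by
  have hswap : ∀ x z : Fin n, x ≠ p → z ≠ p → swap x z ∈ rankFixer φ r := by
    intro x z hx hz
    wlog hxz : x ≤ z generalizing x z
    · rw [swap_comm]; exact this z x hz hx (le_of_not_ge hxz)
    have hx1 : 1 ≤ (x : ℕ) := by have := Fin.val_ne_of_ne hx; omega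
    exact Fin.swap_mem_of_swap_succ_mem _
      (fun i j hi hij => hloc.swap_mem_rankFixer hij (by omega)) hx1 hxz
  refine Perm.mem_of_forall_swap_apply_mem fun x => ?_
  by_cases hx : x = p
  · rw [hx, hσ, swap_self]; exact Subgroup.one_mem _
  · exact hswap x (σ x) hx (fun h => hx (σ.injective (h.trans hσ.symm)))

variable (φ) in
def chainStabilizer (c : {c : Fin (n + 1) → P // IsMaxChainOf n c}) :
    Subgroup (Perm (Fin n)) :=
  (MulAction.stabilizer _ c).comap φ

@[simp]
theorem mem_chainStabilizer {c : {c : Fin (n + 1) → P // IsMaxChainOf n c}}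
    {σ : Perm (Fin n)} : σ ∈ chainStabilizer φ c ↔ φ σ c = c :=
  Iff.rfl

theorem IsLocalAction.swap_mem_chainStabilizer_of_apply_eq (hloc : IsLocalAction φ)
    {c : {c : Fin (n + 1) → P // IsMaxChainOf n c}} {σ : Perm (Fin n)}
    (hσc : σ ∈ chainStabilizer φ c) {p q : Fin n} (hp : (p : ℕ) = 0) (hq : (q : ℕ) = 1)
    (hσ : σ p = q) : swap p q ∈ chainStabilizer φ c := by
  have hτ : (swap p q * σ) p = p := by rw [Perm.mul_apply, hσ, swap_apply_right]
  set d := φ (swap p q * σ) c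
  have hcd : φ (swap p q) d = c := by
    rw [← Perm.mul_apply, ← map_mul, swap_mul_self_mul]; exact hσc
  have hdc : d = c := by
    ext r : 2
    by_cases hr : (r : ℕ) = 1
    · exact hloc.mem_rankFixer_of_apply_eq_self hr hp hτ c
    · rw [← hcd]
      exact (hloc.swap_mem_rankFixer (by omega) (by omega) d).symm
  rwa [hdc] at hcd

theorem conj_mem_chainStabilizer_apply_iff {c : {c : Fin (n + 1) → P // IsMaxChainOf n c}}
    (g σ : Perm (Fin n)) :
    g * σ * g⁻¹ ∈ chainStabilizer φ (φ g c) ↔ σ ∈ chainStabilizer φ c := by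
  simp only [mem_chainStabilizer, map_mul, map_inv, Perm.mul_apply, Perm.coe_inv,
    symm_apply_apply, EmbeddingLike.apply_eq_iff_eq]

theorem IsLocalAction.swap_apply_mem_chainStabilizer (hloc : IsLocalAction φ)
    {c : {c : Fin (n + 1) → P // IsMaxChainOf n c}} {σ : Perm (Fin n)}
    (hσ : σ ∈ chainStabilizer φ c) (a : Fin n) : swap a (σ a) ∈ chainStabilizer φ c := by
  by_cases ha : σ a = a
  · rw [ha, swap_self]; exact Subgroup.one_mem _
  have hn : 1 < n := by have := Fin.val_ne_of_ne ha; omega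
  let p : Fin n := ⟨0, by omega⟩
  let q : Fin n := ⟨1, hn⟩
  have hpq : p ≠ q := Fin.ne_of_val_ne zero_ne_one
  obtain ⟨u, hua, hub⟩ := Perm.exists_apply_eq_apply_eq (Ne.symm ha) hpq
  rw [← conj_mem_chainStabilizer_apply_iff u, ← swap_apply_apply, hua, hub]
  refine hloc.swap_mem_chainStabilizer_of_apply_eq
    ((conj_mem_chainStabilizer_apply_iff u σ).mpr hσ) rfl rfl ?_
  rwa [Perm.mul_apply, Perm.mul_apply, ← hua, Perm.coe_inv, symm_apply_apply]

end LocalAction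

theorem local_action_stabilizer_young_general
    {P : Type*} [PartialOrder P] [BoundedOrder P]
    (n : ℕ)
    (φ : Equiv.Perm (Fin n) →* Equiv.Perm {c : Fin (n + 1) → P // IsMaxChainOf n c})
    (hloc : IsLocalAction φ)
    (c : {c : Fin (n + 1) → P // IsMaxChainOf n c}) :
    ∃ Q : Finpartition (Finset.univ : Finset (Fin n)), IsYoungStabilizer φ c Q := by
  obtain ⟨Q, hQ⟩ := Equiv.Perm.exists_finpartition_mem_iff_of_swap_apply_mem
    (chainStabilizer φ c) fun _ hσ => hloc.swap_apply_mem_chainStabilizer hσ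
  exact ⟨Q, fun σ => hQ σ⟩

/-- **Simion–Stanley Theorem 4.3(a).** If a finite ranked poset `P` of rank `n` with `0̂`
and `1̂` carries a local action of `S_n` on its maximal chains, then the stabilizer of every
maximal chain is a Young subgroup of `S_n`, i.e. the subgroup of permutations preserving
each block of some set partition of `[n]`. -/
theorem local_action_stabilizer_young
    {P : Type*} [Fintype P] [PartialOrder P] [BoundedOrder P]
    (n : ℕ) (ρ : P → ℕ) (hρ : IsRankFunction n ρ)
    (φ : Equiv.Perm (Fin n) →* Equiv.Perm {c : Fin (n + 1) → P // IsMaxChainOf n c})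
    (hloc : IsLocalAction φ)
    (c : {c : Fin (n + 1) → P // IsMaxChainOf n c}) :
    ∃ Q : Finpartition (Finset.univ : Finset (Fin n)), IsYoungStabilizer φ c Q :=
  local_action_stabilizer_young_general n φ hloc c
end

section
/- Let P be a flag-symmetric finite ranked poset of rank n with an RS-labeling Λ. Then the flag symmetric function satisfies F_P = h_ν for some partition ν of n, and P is isomorphic to the product of chains C_{ν_1+1} × C_{ν_2+1} × ···. -/
/-!
For `u ∈ P` let `λ(u)` (`labelMultiset`) be the multiset of labels of the increasing chain
from `⊥` to `u`. Sorting labels by `S`-moves, which do not move `u`, shows that every maximal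
chain through `u` carries exactly the labels `λ(u)` below `u`. Hence `λ` is monotone. It is
injective, because the chain that increases up to `u` and then from `u` to `⊤` has its label
word determined by `λ(u)` and `λ(⊤)`, and an `S`-labeling is injective. Moving a label `b` of
`λ(y)` to the top step below `y` by `S`-moves gives `x ⋖ y` with `λ(y) = λ(x) + {b}`, so every
submultiset of `λ(⊤)` is some `λ(x)` and `λ` reflects the order. Thus `P` is the lattice of
submultisets of `λ(⊤)`, the product of the chains `C_{m+1}` over the multiplicities `m` of
`λ(⊤)`, and its flag function is `∏ h_m` because multichains of length `d` in `C_{m+1}`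
correspond to monomials of degree `m` in `d` variables.
-/

open MvPolynomial

open Finset Relation

theorem IsRankFunction.strictMono {P : Type*} [PartialOrder P] [BoundedOrder P] [Finite P]
    {n : ℕ} {ρ : P → ℕ} (hρ : IsRankFunction n ρ) : StrictMono ρ := by
  intro x y hxy
  induction y using WellFoundedLT.induction with
  | _ y ih =>
    obtain ⟨z, hxz, hzy⟩ := exists_le_covBy_of_lt hxy
    rw [hρ.2.2.1 z y hzy]
    rcases hxz.eq_or_lt with rfl | hxz
    · omega
    · have := ih z hzy.lt hxz
      omega

theorem IsRankFunction.rank_lt_succ {P : Type*} [PartialOrder P] [BoundedOrder P] {n : ℕ}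
    {ρ : P → ℕ} (hρ : IsRankFunction n ρ) (u : P) : ρ u < n + 1 :=
  Nat.lt_succ_of_le (hρ.2.2.2 u)

namespace RSLabeling

section Chains

variable {P : Type*} [PartialOrder P] [BoundedOrder P] {n : ℕ} {ρ : P → ℕ}

abbrev MaxChain (P : Type*) [PartialOrder P] [BoundedOrder P] (n : ℕ) :=
  {c : Fin (n + 1) → P // IsMaxChainOf n c}

theorem MaxChain.apply_zero (c : MaxChain P n) : c.1 0 = ⊥ := c.2.1

theorem MaxChain.apply_last (c : MaxChain P n) : c.1 (Fin.last n) = ⊤ := c.2.2.1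

theorem MaxChain.covBy (c : MaxChain P n) (i : Fin n) : c.1 i.castSucc ⋖ c.1 i.succ :=
  c.2.2.2 i

theorem MaxChain.rank_apply (hρ : IsRankFunction n ρ) (c : MaxChain P n) (i : Fin (n + 1)) :
    ρ (c.1 i) = i := by
  induction i using Fin.induction with
  | zero => rw [MaxChain.apply_zero, hρ.1, Fin.val_zero]
  | succ i ih => rw [hρ.2.2.1 _ _ (MaxChain.covBy c i), ih, Fin.val_succ, Fin.val_castSucc]

theorem nonempty_maxChain [Finite P] (hρ : IsRankFunction n ρ) :
    Nonempty (MaxChain P n) := by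
  obtain ⟨a, ha0, m, ham, hcov⟩ :=
    exists_covBy_seq_of_wellFoundedLT_wellFoundedGT_of_le (bot_le : (⊥ : P) ≤ ⊤)
  have hrank : ∀ i ≤ m, ρ (a i) = i := by
    intro i hi
    induction i with
    | zero => rw [ha0, hρ.1]
    | succ i ih => rw [hρ.2.2.1 _ _ (hcov i (by omega)), ih (by omega)]
  obtain rfl : m = n := by rw [← hrank m le_rfl, ham, hρ.2.1]
  exact ⟨⟨fun i => a i, ha0, by simpa using ham, fun i => hcov i i.2⟩⟩

end Chains

section Words

variable {n : ℕ} {L : Type*}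

def prefixMultiset (f : Fin n → L) (k : ℕ) : Multiset L :=
  (univ.filter fun i : Fin n => (i : ℕ) < k).val.map f

def suffixMultiset (f : Fin n → L) (k : ℕ) : Multiset L :=
  (univ.filter fun i : Fin n => k ≤ (i : ℕ)).val.map f

variable {f g : Fin n → L} {k : ℕ}

theorem prefixMultiset_congr (h : ∀ i : Fin n, (i : ℕ) < k → f i = g i) :
    prefixMultiset f k = prefixMultiset g k :=
  Multiset.map_congr rfl fun i hi => h i (by simpa using hi)

theorem card_prefixMultiset (hk : k ≤ n) : Multiset.card (prefixMultiset f k) = k := by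
  rw [prefixMultiset, Multiset.card_map, card_val, Fin.card_filter_val_lt, min_eq_right hk]

theorem prefixMultiset_mono {k' : ℕ} (h : k ≤ k') : prefixMultiset f k ≤ prefixMultiset f k' :=
  Multiset.map_le_map <| val_le_iff.2 <| monotone_filter_right _ fun i _ (hi : (i : ℕ) < k) =>
    hi.trans_le h

theorem prefixMultiset_succ (hk : k < n) :
    prefixMultiset f (k + 1) = f ⟨k, hk⟩ ::ₘ prefixMultiset f k := by
  have : (univ.filter fun i : Fin n => (i : ℕ) < k + 1) =
      insert ⟨k, hk⟩ (univ.filter fun i : Fin n => (i : ℕ) < k) := by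
    ext i
    simp only [mem_filter, mem_univ, true_and, mem_insert, Fin.ext_iff]
    omega
  rw [prefixMultiset, this, insert_val_of_notMem (by simp), Multiset.map_cons, prefixMultiset]

theorem prefixMultiset_of_le (hk : n ≤ k) : prefixMultiset f k = univ.val.map f := by
  rw [prefixMultiset, filter_true_of_mem fun i _ => by omega]

theorem prefixMultiset_add_suffixMultiset :
    prefixMultiset f k + suffixMultiset f k = univ.val.map f := by
  simp_rw [prefixMultiset, suffixMultiset, ← not_lt, ← Multiset.map_add, filter_val,
    Multiset.filter_add_not]

theorem prefixMultiset_comp_swap {a b : Fin n} (ha : (a : ℕ) < k) (hb : (b : ℕ) < k) :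
    prefixMultiset (f ∘ Equiv.swap a b) k = prefixMultiset f k := by
  have hinv : (univ.filter fun i : Fin n => (i : ℕ) < k).map (Equiv.swap a b).toEmbedding =
      univ.filter fun i : Fin n => (i : ℕ) < k := by
    ext i
    rw [mem_map_equiv, Equiv.symm_swap]
    simp only [mem_filter, mem_univ, true_and]
    rcases eq_or_ne i a with rfl | hia
    · simp [ha, hb]
    rcases eq_or_ne i b with rfl | hib
    · simp [ha, hb]
    · rw [Equiv.swap_apply_of_ne_of_ne hia hib]
  rw [prefixMultiset, ← Multiset.map_map, ← Equiv.coe_toEmbedding, ← map_val, hinv, prefixMultiset]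

theorem eqOn_of_monotoneOn_of_map_val_eq [LinearOrder L] {ι : Type*} [LinearOrder ι] {s : Finset ι}
    {f g : ι → L} (hf : MonotoneOn f s) (hg : MonotoneOn g s)
    (h : s.val.map f = s.val.map g) : Set.EqOn f g s := by
  have hsorted : ∀ f : ι → L, MonotoneOn f s → ((s.sort (· ≤ ·)).map f).Pairwise (· ≤ ·) :=
    fun f hf => List.pairwise_map.2 <| (s.pairwise_sort (· ≤ ·)).imp_of_mem
      fun ha hb hab => hf ((mem_sort _).1 ha) ((mem_sort _).1 hb) hab
  have hperm : ((s.sort (· ≤ ·)).map f).Perm ((s.sort (· ≤ ·)).map g) := by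
    rw [← Multiset.coe_eq_coe, ← Multiset.map_coe, ← Multiset.map_coe, sort_eq, h]
  intro i hi
  exact List.map_inj_left.1 (hperm.eq_of_pairwise' (hsorted f hf) (hsorted g hg)) i
    ((mem_sort _).2 hi)

theorem monotoneOn_of_le_succ [Preorder L] {lo hi : ℕ}
    (h : ∀ (s : ℕ) (h₁ : s < n) (h₂ : s + 1 < n), lo ≤ s → s + 2 ≤ hi →
      f ⟨s, h₁⟩ ≤ f ⟨s + 1, h₂⟩) :
    MonotoneOn f {i | lo ≤ (i : ℕ) ∧ (i : ℕ) < hi} := by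
  rintro ⟨i, hin⟩ ⟨hlo, -⟩ ⟨j, hjn⟩ ⟨-, hjhi⟩ hij
  simp only [Fin.mk_le_mk] at hij hlo hjhi
  induction j, hij using Nat.le_induction with
  | base => rfl
  | succ j hij ih =>
    exact (ih (by omega) (by omega)).trans (h j (by omega) hjn (by omega) (by omega))

end Words

section SMoves

variable {P : Type*} [PartialOrder P] [BoundedOrder P] {n : ℕ} {L : Type*}
  (Λ : MaxChain P n → Fin n → L)

def SwapBelow (k : ℕ) (c c' : MaxChain P n) : Prop :=
  ∃ (p : ℕ) (hp : p + 1 < n), p + 1 < k ∧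
    (∀ r : Fin (n + 1), (r : ℕ) ≠ p + 1 → c'.1 r = c.1 r) ∧
    Λ c' = Λ c ∘ Equiv.swap ⟨p, by omega⟩ ⟨p + 1, hp⟩

variable {Λ} {k : ℕ} {c c' : MaxChain P n}

theorem apply_eq_of_reflTransGen_swapBelow (h : ReflTransGen (SwapBelow Λ k) c c')
    {r : Fin (n + 1)} (hr : k ≤ r) : c'.1 r = c.1 r := by
  induction h with
  | refl => rfl
  | tail _ hstep ih =>
    obtain ⟨p, -, hpk, hfix, -⟩ := hstep
    exact (hfix r (by omega)).trans ih

theorem prefixMultiset_eq_of_reflTransGen_swapBelow (h : ReflTransGen (SwapBelow Λ k) c c') :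
    prefixMultiset (Λ c') k = prefixMultiset (Λ c) k := by
  induction h with
  | refl => rfl
  | tail _ hstep ih =>
    obtain ⟨p, hp, hpk, -, hΛ⟩ := hstep
    rw [hΛ, prefixMultiset_comp_swap (by simp; omega) hpk, ih]

theorem exists_swapBelow (hS : IsSLabeling Λ) (c : MaxChain P n) {p : ℕ} (hp : p + 1 < n)
    (hpk : p + 1 < k) (hne : Λ c ⟨p, by omega⟩ ≠ Λ c ⟨p + 1, hp⟩) :
    ∃ c', SwapBelow Λ k c c' ∧ Λ c' = Λ c ∘ Equiv.swap ⟨p, by omega⟩ ⟨p + 1, hp⟩ := by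
  obtain ⟨c', ⟨hfix, hΛ⟩, -⟩ := hS.2 c p hp hne
  exact ⟨c', ⟨p, hp, hpk, hfix, hΛ⟩, hΛ⟩

/-- Bubble sort by `S`-moves: each move swaps a descent, so the label word decreases
lexicographically, and there are finitely many maximal chains. -/
theorem exists_reflTransGen_swapBelow_monotoneOn [LinearOrder L] [Finite P]
    (hS : IsSLabeling Λ) (c : MaxChain P n) :
    ∃ c', ReflTransGen (SwapBelow Λ k) c c' ∧ MonotoneOn (Λ c') {i | (i : ℕ) < k} := by
  have wf : WellFounded fun c' c : MaxChain P n => toLex (Λ c') < toLex (Λ c) :=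
    @Finite.wellFounded_of_trans_of_irrefl _ _ _ ⟨fun _ _ _ => lt_trans⟩ ⟨fun _ => lt_irrefl _⟩
  induction c using wf.induction with
  | _ c ih =>
  by_cases hmono : MonotoneOn (Λ c) {i | (i : ℕ) < k}
  · exact ⟨c, .refl, hmono⟩
  obtain ⟨p, hp, hpk, hdesc⟩ :
      ∃ (p : ℕ) (hp : p + 1 < n), p + 1 < k ∧ Λ c ⟨p + 1, hp⟩ < Λ c ⟨p, by omega⟩ := by
    by_contra! h
    exact hmono <| (monotoneOn_of_le_succ (lo := 0) fun s _ h₂ _ hs => h s h₂ (by omega)).mono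
      fun i hi => ⟨Nat.zero_le _, hi⟩
  obtain ⟨c₁, hc₁, hΛ⟩ := exists_swapBelow hS c hp hpk hdesc.ne'
  obtain ⟨c₂, h₂, hmono₂⟩ := ih c₁ (by rw [hΛ]; exact Pi.lex_desc (Fin.le_def.2 (by simp)) hdesc)
  exact ⟨c₂, .head hc₁ h₂, hmono₂⟩

/-- The label at `p` is a smallest one among positions `p, …, k`, so each step moving it up
either swaps two distinct labels or is not needed. -/
theorem exists_reflTransGen_swapBelow_apply_eq [LinearOrder L] (hS : IsSLabeling Λ)
    (hk : k < n) (c : MaxChain P n) (p : Fin n) (hpk : (p : ℕ) ≤ k)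
    (hmin : ∀ q : Fin n, p ≤ q → (q : ℕ) ≤ k → Λ c p ≤ Λ c q) :
    ∃ c', ReflTransGen (SwapBelow Λ (k + 1)) c c' ∧ Λ c' ⟨k, hk⟩ = Λ c p := by
  induction hd : k - (p : ℕ) generalizing c p with
  | zero => exact ⟨c, .refl, congrArg _ (Fin.ext (by simp; omega))⟩
  | succ d ih =>
    have hp₁ : (p : ℕ) + 1 < n := by omega
    set p₁ : Fin n := ⟨p + 1, hp₁⟩
    obtain ⟨c₁, h₁, hlab₁, hfix₁⟩ : ∃ c₁, ReflTransGen (SwapBelow Λ (k + 1)) c c₁ ∧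
        Λ c₁ p₁ = Λ c p ∧ ∀ q : Fin n, p₁ < q → Λ c₁ q = Λ c q := by
      rcases (hmin p₁ (Fin.le_def.2 (by simp [p₁])) (by simp [p₁]; omega)).eq_or_lt
        with heq | hlt
      · exact ⟨c, .refl, heq.symm, fun _ _ => rfl⟩
      obtain ⟨c₁, hc₁, hΛ⟩ := exists_swapBelow (k := k + 1) hS c hp₁ (by omega) hlt.ne
      refine ⟨c₁, .single hc₁, by simp [hΛ, p₁], fun q hq => ?_⟩
      rw [Fin.lt_def] at hq
      rw [hΛ, Function.comp_apply, Equiv.swap_apply_of_ne_of_ne] <;>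
        simp [Fin.ext_iff, p₁] at hq ⊢ <;> omega
    have hmin₁ : ∀ q : Fin n, p₁ ≤ q → (q : ℕ) ≤ k → Λ c₁ p₁ ≤ Λ c₁ q := by
      intro q hq hqk
      rcases hq.eq_or_lt with rfl | hq
      · rfl
      · rw [hlab₁, hfix₁ q hq]
        exact hmin q (Fin.le_def.2 (by rw [Fin.lt_def] at hq; simp [p₁] at hq; omega)) hqk
    obtain ⟨c₂, h₂, hlab₂⟩ := ih c₁ p₁ (by simp [p₁]; omega) hmin₁ (by simp [p₁]; omega)
    exact ⟨c₂, h₁.trans h₂, hlab₂.trans hlab₁⟩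

end SMoves

section LabelMultiset

variable {P : Type*} [PartialOrder P] [BoundedOrder P] {n : ℕ} {L : Type*} [LinearOrder L]
  (Λ : MaxChain P n → Fin n → L) (ρ : P → ℕ)

def IsIncreasingTo (u : P) (c : MaxChain P n) : Prop :=
  (∀ s : Fin (n + 1), (s : ℕ) = ρ u → c.1 s = u) ∧ MonotoneOn (Λ c) {i | (i : ℕ) < ρ u}

noncomputable def labelMultiset (u : P) : Multiset L :=
  open Classical in
  if h : ∃ c, IsIncreasingTo Λ ρ u c then prefixMultiset (Λ h.choose) (ρ u) else 0

variable {Λ ρ} {u x y : P} {c c' : MaxChain P n}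

theorem exists_isIncreasingTo [Finite P] (hρ : IsRankFunction n ρ)
    (hR : IsRelLabeling ρ Λ (· ≤ ·)) (u : P) : ∃ c, IsIncreasingTo Λ ρ u c := by
  obtain ⟨c₀⟩ := nonempty_maxChain hρ
  obtain ⟨c, ⟨-, hu, hmono⟩, -⟩ := hR c₀ 0 u (by rw [MaxChain.apply_zero]; exact bot_le)
  exact ⟨c, hu, (monotoneOn_of_le_succ fun s h₁ h₂ _ hs => hmono s h₁ h₂ (Nat.zero_le _) hs).mono
    fun i hi => ⟨Nat.zero_le _, hi⟩⟩

theorem IsIncreasingTo.apply_eq (hR : IsRelLabeling ρ Λ (· ≤ ·)) (hc : IsIncreasingTo Λ ρ u c)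
    (hc' : IsIncreasingTo Λ ρ u c') {s : Fin (n + 1)} (hs : (s : ℕ) ≤ ρ u) :
    c.1 s = c'.1 s := by
  have hstart : ∀ d : MaxChain P n, ∀ s : Fin (n + 1), s ≤ 0 → d.1 s = c.1 s := fun d s hs => by
    rw [Fin.le_zero_iff.1 hs, MaxChain.apply_zero, MaxChain.apply_zero]
  have hadj : ∀ d, IsIncreasingTo Λ ρ u d → ∀ (s : ℕ) (h₁ : s < n) (h₂ : s + 1 < n),
      ((0 : Fin (n + 1)) : ℕ) ≤ s → s + 2 ≤ ρ u → Λ d ⟨s, h₁⟩ ≤ Λ d ⟨s + 1, h₂⟩ :=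
    fun d hd s _ _ _ hs => hd.2 (show s < ρ u by omega) (show s + 1 < ρ u by omega)
      (Fin.le_def.2 (by simp))
  obtain ⟨d, -, huniq⟩ := hR c 0 u (by rw [MaxChain.apply_zero]; exact bot_le)
  exact (huniq c ⟨hstart c, hc.1, hadj c hc⟩ s hs).trans
    (huniq c' ⟨hstart c', hc'.1, hadj c' hc'⟩ s hs).symm

theorem IsIncreasingTo.labelMultiset_eq (hρ : IsRankFunction n ρ) (hC : IsCLabeling Λ)
    (hR : IsRelLabeling ρ Λ (· ≤ ·)) (hc : IsIncreasingTo Λ ρ u c) :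
    labelMultiset Λ ρ u = prefixMultiset (Λ c) (ρ u) := by
  have h : ∃ c, IsIncreasingTo Λ ρ u c := ⟨c, hc⟩
  rw [labelMultiset, dif_pos h]
  exact prefixMultiset_congr fun i hi => hC _ _ ⟨ρ u, hρ.rank_lt_succ u⟩
    (fun s hs => h.choose_spec.apply_eq hR hc (Fin.le_def.1 hs)) i hi

theorem card_labelMultiset [Finite P] (hρ : IsRankFunction n ρ)
    (hR : IsRelLabeling ρ Λ (· ≤ ·)) (u : P) : Multiset.card (labelMultiset Λ ρ u) = ρ u := by
  rw [labelMultiset, dif_pos (exists_isIncreasingTo hρ hR u), card_prefixMultiset (hρ.2.2.2 u)]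

/-- Every maximal chain has the same labels below `u` as the increasing chain to `u`: sort
its labels below `u` by `S`-moves, which fix `u`, and use uniqueness in the `R`-labeling. -/
theorem labelMultiset_apply [Finite P] (hρ : IsRankFunction n ρ) (hC : IsCLabeling Λ)
    (hR : IsRelLabeling ρ Λ (· ≤ ·)) (hS : IsSLabeling Λ) (c : MaxChain P n) (k : Fin (n + 1)) :
    labelMultiset Λ ρ (c.1 k) = prefixMultiset (Λ c) k := by
  obtain ⟨c', hcc', hmono⟩ := exists_reflTransGen_swapBelow_monotoneOn (k := k) hS c
  have hrank : ρ (c.1 k) = k := MaxChain.rank_apply hρ c k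
  have hinc : IsIncreasingTo Λ ρ (c.1 k) c' := by
    refine ⟨fun s hs => ?_, by rwa [hrank]⟩
    rw [Fin.ext (hs.trans hrank)]
    exact apply_eq_of_reflTransGen_swapBelow hcc' le_rfl
  rw [hinc.labelMultiset_eq hρ hC hR, hrank, prefixMultiset_eq_of_reflTransGen_swapBelow hcc']

theorem labelMultiset_eq_prefixMultiset [Finite P] (hρ : IsRankFunction n ρ)
    (hC : IsCLabeling Λ) (hR : IsRelLabeling ρ Λ (· ≤ ·)) (hS : IsSLabeling Λ)
    (hcu : ∀ s : Fin (n + 1), (s : ℕ) = ρ u → c.1 s = u) :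
    labelMultiset Λ ρ u = prefixMultiset (Λ c) (ρ u) := by
  have := labelMultiset_apply hρ hC hR hS c ⟨ρ u, hρ.rank_lt_succ u⟩
  rwa [hcu _ rfl] at this

theorem map_univ_eq_labelMultiset_top [Finite P] (hρ : IsRankFunction n ρ) (hC : IsCLabeling Λ)
    (hR : IsRelLabeling ρ Λ (· ≤ ·)) (hS : IsSLabeling Λ) (c : MaxChain P n) :
    univ.val.map (Λ c) = labelMultiset Λ ρ ⊤ := by
  rw [← MaxChain.apply_last c, labelMultiset_apply hρ hC hR hS, Fin.val_last,
    prefixMultiset_of_le le_rfl]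

theorem labelMultiset_mono [Finite P] (hρ : IsRankFunction n ρ) (hC : IsCLabeling Λ)
    (hR : IsRelLabeling ρ Λ (· ≤ ·)) (hS : IsSLabeling Λ) (hxy : x ≤ y) :
    labelMultiset Λ ρ x ≤ labelMultiset Λ ρ y := by
  obtain ⟨cx, hcx⟩ := exists_isIncreasingTo hρ hR x
  obtain ⟨d, ⟨hdx, hdy, -⟩, -⟩ :=
    hR cx ⟨ρ x, hρ.rank_lt_succ x⟩ y (by rw [hcx.1 _ rfl]; exact hxy)
  have hdx' : ∀ s : Fin (n + 1), (s : ℕ) = ρ x → d.1 s = x := fun s hs => by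
    rw [show s = ⟨ρ x, hρ.rank_lt_succ x⟩ from Fin.ext hs, hdx _ le_rfl]
    exact hcx.1 _ rfl
  rw [labelMultiset_eq_prefixMultiset hρ hC hR hS hdx',
    labelMultiset_eq_prefixMultiset hρ hC hR hS hdy]
  exact prefixMultiset_mono (hρ.strictMono.monotone hxy)

theorem exists_isIncreasingTo_monotoneOn_ge [Finite P] (hρ : IsRankFunction n ρ)
    (hC : IsCLabeling Λ) (hR : IsRelLabeling ρ Λ (· ≤ ·)) (x : P) :
    ∃ e, IsIncreasingTo Λ ρ x e ∧ MonotoneOn (Λ e) {i | ρ x ≤ (i : ℕ)} := by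
  obtain ⟨cx, hcx⟩ := exists_isIncreasingTo hρ hR x
  obtain ⟨e, ⟨hex, -, hmono⟩, -⟩ :=
    hR cx ⟨ρ x, hρ.rank_lt_succ x⟩ ⊤ le_top
  have hlab : ∀ i : Fin n, (i : ℕ) < ρ x → Λ e i = Λ cx i := hC e cx _ hex
  refine ⟨e, ⟨fun s hs => ?_, ?_⟩, ?_⟩
  · rw [show s = ⟨ρ x, hρ.rank_lt_succ x⟩ from Fin.ext hs, hex _ le_rfl]
    exact hcx.1 _ rfl
  · intro i hi j hj hij
    rw [hlab i hi, hlab j hj]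
    exact hcx.2 hi hj hij
  · refine (monotoneOn_of_le_succ fun s h₁ h₂ hs hs' => ?_).mono fun i hi => ⟨hi, i.2⟩
    exact hmono s h₁ h₂ hs (by rw [hρ.2.1]; omega)

/-- The chain through `x` that increases both below and above `x` has its label word determined
by `labelMultiset x` and `labelMultiset ⊤`; `S`-injectivity then recovers `x`. -/
theorem labelMultiset_injective [Finite P] (hρ : IsRankFunction n ρ) (hC : IsCLabeling Λ)
    (hR : IsRelLabeling ρ Λ (· ≤ ·)) (hS : IsSLabeling Λ) :
    Function.Injective (labelMultiset Λ ρ) := by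
  intro x y hxy
  have hrank : ρ x = ρ y := by
    rw [← card_labelMultiset hρ hR x, hxy, card_labelMultiset hρ hR y]
  obtain ⟨ex, hex, hex'⟩ := exists_isIncreasingTo_monotoneOn_ge hρ hC hR x
  obtain ⟨ey, hey, hey'⟩ := exists_isIncreasingTo_monotoneOn_ge hρ hC hR y
  rw [← hrank] at hey'
  have hprefix : prefixMultiset (Λ ex) (ρ x) = prefixMultiset (Λ ey) (ρ x) := by
    rw [← hex.labelMultiset_eq hρ hC hR, hxy, hey.labelMultiset_eq hρ hC hR, hrank]
  have hsuffix : suffixMultiset (Λ ex) (ρ x) = suffixMultiset (Λ ey) (ρ x) := by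
    refine add_left_cancel (a := prefixMultiset (Λ ex) (ρ x)) ?_
    rw [prefixMultiset_add_suffixMultiset, hprefix, prefixMultiset_add_suffixMultiset,
      map_univ_eq_labelMultiset_top hρ hC hR hS, map_univ_eq_labelMultiset_top hρ hC hR hS]
  have hlabels : Λ ex = Λ ey := by
    funext i
    by_cases hi : (i : ℕ) < ρ x
    · refine eqOn_of_monotoneOn_of_map_val_eq ?_ ?_ hprefix (by simpa using hi)
      · simpa using hex.2
      · simpa [hrank] using hey.2
    · refine eqOn_of_monotoneOn_of_map_val_eq ?_ ?_ hsuffix (by simpa using hi)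
      · simpa using hex'
      · simpa using hey'
  have hxe := hex.1 ⟨ρ x, hρ.rank_lt_succ x⟩ rfl
  rw [← hxe, hS.1 hlabels, hey.1 _ hrank]

/-- On the increasing chain to `y` the labels after an occurrence of `b` are no smaller, so
`S`-moves bring `b` to the top step below `y`; `x` is the element below it on the new chain. -/
theorem exists_covBy_labelMultiset_eq_cons [Finite P] (hρ : IsRankFunction n ρ)
    (hC : IsCLabeling Λ) (hR : IsRelLabeling ρ Λ (· ≤ ·)) (hS : IsSLabeling Λ) {b : L}
    (hb : b ∈ labelMultiset Λ ρ y) :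
    ∃ x, x ⋖ y ∧ labelMultiset Λ ρ y = b ::ₘ labelMultiset Λ ρ x := by
  obtain ⟨cy, hcy⟩ := exists_isIncreasingTo hρ hR y
  rw [hcy.labelMultiset_eq hρ hC hR] at hb ⊢
  obtain ⟨p, hp, rfl⟩ := Multiset.mem_map.1 hb
  simp only [mem_val, mem_filter, mem_univ, true_and] at hp
  obtain ⟨k, hk⟩ : ∃ k, ρ y = k + 1 := ⟨ρ y - 1, by omega⟩
  have hkn : k < n := by have := hρ.2.2.2 y; omega
  obtain ⟨c, hc, hlab⟩ := exists_reflTransGen_swapBelow_apply_eq hS hkn cy p (by omega)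
    fun q hpq hq => hcy.2 (show (p : ℕ) < ρ y by omega) (show (q : ℕ) < ρ y by omega) hpq
  refine ⟨c.1 (⟨k, hkn⟩ : Fin n).castSucc, ?_, ?_⟩
  · convert MaxChain.covBy c ⟨k, hkn⟩
    rw [apply_eq_of_reflTransGen_swapBelow hc (by simp)]
    exact (hcy.1 _ (by simp [hk])).symm
  · rw [labelMultiset_apply hρ hC hR hS, hk, ← prefixMultiset_eq_of_reflTransGen_swapBelow hc,
      prefixMultiset_succ hkn, hlab, Fin.val_castSucc]

theorem exists_le_labelMultiset_eq [Finite P] (hρ : IsRankFunction n ρ) (hC : IsCLabeling Λ)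
    (hR : IsRelLabeling ρ Λ (· ≤ ·)) (hS : IsSLabeling Λ) (y : P) (M : Multiset L)
    (hM : M ≤ labelMultiset Λ ρ y) : ∃ x ≤ y, labelMultiset Λ ρ x = M := by
  induction hd : Multiset.card (labelMultiset Λ ρ y) - Multiset.card M generalizing y with
  | zero => exact ⟨y, le_rfl, (Multiset.eq_of_le_of_card_le hM (by omega)).symm⟩
  | succ d ih =>
    obtain ⟨b, hbM⟩ := Multiset.lt_iff_cons_le.1 (hM.lt_of_ne (by rintro rfl; omega))
    obtain ⟨x, hxy, hy⟩ := exists_covBy_labelMultiset_eq_cons hρ hC hR hS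
      (Multiset.mem_of_le hbM (Multiset.mem_cons_self b M))
    rw [hy, Multiset.cons_le_cons_iff] at hbM
    obtain ⟨z, hzx, hz⟩ := ih x hbM (by rw [hy, Multiset.card_cons] at hd; omega)
    exact ⟨z, hzx.trans hxy.le, hz⟩

theorem exists_orderIso_submultisets [Finite P] (hρ : IsRankFunction n ρ) (hC : IsCLabeling Λ)
    (hR : IsRelLabeling ρ Λ (· ≤ ·)) (hS : IsSLabeling Λ) :
    ∃ E : P ≃o {M : Multiset L // M ≤ labelMultiset Λ ρ ⊤},
      ∀ x, (E x : Multiset L) = labelMultiset Λ ρ x := by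
  have hle : ∀ x y, labelMultiset Λ ρ x ≤ labelMultiset Λ ρ y ↔ x ≤ y := by
    refine fun x y => ⟨fun h => ?_, labelMultiset_mono hρ hC hR hS⟩
    obtain ⟨z, hzy, hz⟩ := exists_le_labelMultiset_eq hρ hC hR hS y _ h
    rwa [← labelMultiset_injective hρ hC hR hS hz]
  let f : P ↪o {M : Multiset L // M ≤ labelMultiset Λ ρ ⊤} :=
    OrderEmbedding.ofMapLEIff
      (fun x => ⟨labelMultiset Λ ρ x, labelMultiset_mono hρ hC hR hS le_top⟩)
      fun x y => Subtype.mk_le_mk.trans (hle x y)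
  refine ⟨RelIso.ofSurjective f fun M => ?_, fun x => rfl⟩
  obtain ⟨x, -, hx⟩ := exists_le_labelMultiset_eq hρ hC hR hS ⊤ M.1 M.2
  exact ⟨x, Subtype.ext hx⟩

end LabelMultiset

end RSLabeling

section SubmultisetLattice

theorem exists_sorted_enumeration {ι : Type*} [Fintype ι] (f : ι → ℕ) :
    ∃ (l : List ℕ) (e : Fin l.length ≃ ι), l.Pairwise (· ≥ ·) ∧ ∀ i, l.get i = f (e i) := by
  set eF := (Fintype.equivFin ι).symm
  set g : Fin (Fintype.card ι) → ℕᵒᵈ := fun i => OrderDual.toDual (f (eF i))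
  refine ⟨List.ofFn fun i => f (eF (Tuple.sort g i)),
    (finCongr List.length_ofFn).trans ((Tuple.sort g).trans eF),
    List.pairwise_ofFn.2 fun i j hij => Tuple.monotone_sort g hij.le, fun i => by simp; rfl⟩

variable {α ι : Type*} [DecidableEq α] {A M M' : Multiset α} (e : ι ≃ A.toFinset)

theorem Multiset.le_iff_forall_count_le_of_le (hM : M ≤ A) :
    M ≤ M' ↔ ∀ i, M.count (e i : α) ≤ M'.count (e i : α) := by
  refine ⟨fun h i => Multiset.count_le_of_le _ h, fun h => Multiset.le_iff_count.2 fun a => ?_⟩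
  by_cases ha : a ∈ A.toFinset
  · simpa using h (e.symm ⟨a, ha⟩)
  · rw [Multiset.count_eq_zero_of_notMem fun h =>
      ha (Multiset.mem_toFinset.2 (Multiset.mem_of_le hM h))]
    exact Nat.zero_le _

theorem Multiset.exists_le_forall_count_eq [Fintype ι] (T : ι → ℕ)
    (hT : ∀ i, T i ≤ A.count (e i : α)) :
    ∃ M ≤ A, ∀ i, M.count (e i : α) = T i := by
  set M : Multiset α := ∑ i, Multiset.replicate (T i) (e i : α)
  have hcount : ∀ a, M.count a = ∑ i, if (e i : α) = a then T i else 0 := fun a => by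
    simp [M, Multiset.count_sum', Multiset.count_replicate]
  have hcount_e : ∀ j, M.count (e j : α) = T j := fun j => by
    rw [hcount, Finset.sum_eq_single j (fun i _ hij => if_neg fun h =>
      hij (e.injective (Subtype.ext h))) (by simp), if_pos rfl]
  refine ⟨M, Multiset.le_iff_count.2 fun a => ?_, hcount_e⟩
  by_cases ha : a ∈ A.toFinset
  · obtain ⟨j, rfl⟩ : ∃ j, (e j : α) = a := ⟨e.symm ⟨a, ha⟩, by simp⟩
    rw [hcount_e]
    exact hT j
  · rw [hcount, Finset.sum_eq_zero fun i _ => if_neg fun (h : (e i : α) = a) => ha (h ▸ (e i).2)]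
    exact Nat.zero_le _

theorem Multiset.exists_orderIso_pi_fin [Fintype ι] (m : ι → ℕ)
    (hm : ∀ i, m i = A.count (e i : α)) :
    ∃ E : {M : Multiset α // M ≤ A} ≃o ∀ i, Fin (m i + 1),
      ∀ M, ∑ i, (E M i : ℕ) = Multiset.card (M : Multiset α) := by
  let F : {M // M ≤ A} ↪o ∀ i, Fin (m i + 1) :=
    OrderEmbedding.ofMapLEIff
      (fun M i => ⟨M.1.count (e i : α),
        by rw [hm]; exact Nat.lt_succ_of_le (Multiset.count_le_of_le _ M.2)⟩)
      fun M M' => (Multiset.le_iff_forall_count_le_of_le e M.2).symm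
  have hF : Function.Surjective F := fun T => by
    obtain ⟨M, hMA, hM⟩ := Multiset.exists_le_forall_count_eq e (fun i => T i)
      fun i => hm i ▸ Nat.lt_succ_iff.1 (T i).2
    exact ⟨⟨M, hMA⟩, funext fun i => Fin.ext (hM i)⟩
  refine ⟨RelIso.ofSurjective F hF, fun M => ?_⟩
  change ∑ i, M.1.count (e i : α) = _
  rw [Equiv.sum_comp e fun a : A.toFinset => M.1.count (a : α),
    Finset.sum_coe_sort A.toFinset fun a => M.1.count a,
    Multiset.sum_count_eq_card fun a ha => Multiset.mem_toFinset.2 (Multiset.mem_of_le M.2 ha)]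

theorem Multiset.exists_partition_orderIso_pi_fin (A : Multiset α) :
    ∃ l : List ℕ, l.Pairwise (· ≥ ·) ∧ (∀ m ∈ l, 0 < m) ∧ l.sum = Multiset.card A ∧
      ∃ E : {M : Multiset α // M ≤ A} ≃o ∀ i : Fin l.length, Fin (l.get i + 1),
        ∀ M, ∑ i, (E M i : ℕ) = Multiset.card (M : Multiset α) := by
  obtain ⟨l, e, hsorted, hl⟩ := exists_sorted_enumeration fun a : A.toFinset => A.count (a : α)
  refine ⟨l, hsorted, fun m hm => ?_, ?_, Multiset.exists_orderIso_pi_fin e _ hl⟩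
  · obtain ⟨i, rfl⟩ := List.mem_iff_get.1 hm
    rw [hl]
    exact Multiset.count_pos.2 (Multiset.mem_toFinset.1 (e i).2)
  · rw [← Multiset.toFinset_sum_count_eq, ← Finset.sum_coe_sort, ← Fin.sum_univ_getElem]
    exact Fintype.sum_equiv e _ _ fun i => by simpa using hl i

end SubmultisetLattice

section FlagPolynomial

theorem Multiset.prod_map_X_eq_prod_pow_count {σ R : Type*} [Fintype σ] [DecidableEq σ]
    [CommSemiring R] (s : Multiset σ) :
    (s.map (X : σ → MvPolynomial σ R)).prod = ∏ i, X i ^ s.count i := by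
  rw [Finset.prod_multiset_map_count]
  exact prod_subset (subset_univ _) fun i _ hi => by
    rw [Multiset.count_eq_zero.2 (by simpa using hi), pow_zero]

variable {d : ℕ}

theorem Multiset.countP_val_lt_succ (s : Multiset (Fin d)) (j : Fin d) :
    s.countP (fun i : Fin d => (i : ℕ) < j + 1) =
      s.countP (fun i : Fin d => (i : ℕ) < j) + s.count j := by
  induction s using Multiset.induction_on with
  | empty => simp
  | cons a s ih =>
    simp only [Multiset.countP_cons, Multiset.count_cons, ih]
    split_ifs <;> simp_all [Fin.ext_iff] <;> omega

def finMultichains (d m : ℕ) : Finset (Fin (d + 1) → Fin (m + 1)) :=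
  univ.filter fun t => t 0 = 0 ∧ t (Fin.last d) = Fin.last m ∧ Monotone t

def stepMultiset (t : Fin (d + 1) → ℕ) : Multiset (Fin d) :=
  ∑ j, Multiset.replicate (t j.succ - t j.castSucc) j

theorem count_stepMultiset (t : Fin (d + 1) → ℕ) (j : Fin d) :
    (stepMultiset t).count j = t j.succ - t j.castSucc := by
  simp [stepMultiset, Multiset.count_sum', Multiset.count_replicate]

theorem countP_stepMultiset {t : Fin (d + 1) → ℕ} (h₀ : t 0 = 0) (ht : Monotone t)
    (i : Fin (d + 1)) : (stepMultiset t).countP (fun j : Fin d => (j : ℕ) < i) = t i := by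
  induction i using Fin.induction with
  | zero => simp [h₀]
  | succ j ih =>
    have := ht (Fin.castSucc_le_succ j)
    rw [Fin.val_succ, Multiset.countP_val_lt_succ, ← Fin.val_castSucc, ih, count_stepMultiset]
    omega

theorem card_stepMultiset {t : Fin (d + 1) → ℕ} (h₀ : t 0 = 0) (ht : Monotone t) :
    Multiset.card (stepMultiset t) = t (Fin.last d) := by
  rw [← countP_stepMultiset h₀ ht, Multiset.countP_eq_card.2 fun j _ => by simp]

/-- Multichains in the chain `Fin (m + 1)` correspond to multisets of size `m` on `Fin d`,
through `stepMultiset` one way and counting the elements `< i` the other way. -/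
theorem sum_finMultichains_eq_hsymm {R : Type*} [CommSemiring R] (m : ℕ) :
    ∑ t ∈ finMultichains d m, ∏ j : Fin d,
      (X j : MvPolynomial (Fin d) R) ^ ((t j.succ : ℕ) - t j.castSucc) = hsymm (Fin d) R m := by
  have hmem : ∀ t ∈ finMultichains d m,
      ((t 0 : ℕ) = 0 ∧ (t (Fin.last d) : ℕ) = m) ∧ Monotone fun i => (t i : ℕ) := fun t ht => by
    simp only [finMultichains, mem_filter, mem_univ, true_and] at ht
    exact ⟨⟨by simp [ht.1], by simp [ht.2.1]⟩, fun a b h => ht.2.2 h⟩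
  set ofSym : Sym (Fin d) m → Fin (d + 1) → Fin (m + 1) := fun s i =>
    ⟨(s : Multiset (Fin d)).countP fun j : Fin d => (j : ℕ) < i,
      Nat.lt_succ_of_le ((Multiset.countP_le_card _ _).trans s.card_coe.le)⟩
  rw [hsymm]
  refine sum_bij' (fun t ht => Sym.mk (stepMultiset fun i => (t i : ℕ))
      (by rw [card_stepMultiset (hmem t ht).1.1 (hmem t ht).2, (hmem t ht).1.2]))
    (fun s _ => ofSym s) (fun _ _ => mem_univ _) ?_ ?_ ?_ ?_
  · intro s _
    simp only [finMultichains, mem_filter, mem_univ, true_and]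
    refine ⟨Fin.ext (by simp [ofSym]), Fin.ext (by simp [ofSym]), fun i i' h => ?_⟩
    simp only [ofSym, Fin.mk_le_mk, Multiset.countP_eq_card_filter]
    exact Multiset.card_le_card (Multiset.monotone_filter_right _ fun j (hj : (j : ℕ) < i) =>
      show (j : ℕ) < i' from hj.trans_le h)
  · intro t ht
    funext i
    exact Fin.ext (countP_stepMultiset (hmem t ht).1.1 (hmem t ht).2 i)
  · intro s _
    refine Sym.ext (Multiset.ext.2 fun j => ?_)
    have h := count_stepMultiset (fun i => (ofSym s i : ℕ)) j
    simp only [ofSym, Fin.val_succ, Fin.val_castSucc, Multiset.countP_val_lt_succ,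
      add_tsub_cancel_left] at h
    exact h
  · intro t _
    simp [Multiset.prod_map_X_eq_prod_pow_count, count_stepMultiset]

theorem flagPoly_eq_prod_hsymm {P : Type*} [PartialOrder P] [BoundedOrder P] [Fintype P]
    {ι : Type*} [Fintype ι] [DecidableEq ι] (ρ : P → ℕ) (m : ι → ℕ)
    (E : P ≃o ∀ i, Fin (m i + 1)) (hρE : ∀ x, ρ x = ∑ i, (E x i : ℕ)) :
    flagPoly ρ d = ∏ i, hsymm (Fin d) ℚ (m i) := by
  simp_rw [← sum_finMultichains_eq_hsymm, prod_univ_sum]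
  rw [flagPoly, finsum_mem_eq_finite_toFinset_sum _ (Set.toFinite _)]
  refine sum_nbij' (fun c i j => E (c j) i) (fun T j => E.symm fun i => T i j)
    ?_ ?_ (fun c _ => funext fun j => E.symm_apply_apply _)
    (fun T _ => funext fun i => funext fun j => congrFun (E.apply_symm_apply _) i) ?_
  · intro c hc
    simp only [Set.Finite.mem_toFinset, Set.mem_ofPred_eq] at hc
    simp only [Fintype.mem_piFinset, finMultichains, mem_filter, mem_univ, true_and]
    refine fun i => ⟨?_, ?_, fun a b h => E.monotone (hc.2.2 h) i⟩
    · rw [hc.1, E.map_bot]; rfl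
    · rw [hc.2.1, E.map_top]; rfl
  · intro T hT
    simp only [Fintype.mem_piFinset, finMultichains, mem_filter, mem_univ, true_and] at hT
    simp only [Set.Finite.mem_toFinset, Set.mem_ofPred_eq]
    refine ⟨?_, ?_, fun a b h => E.symm.monotone fun i => (hT i).2.2 h⟩
    · rw [← E.symm.map_bot]; congr; funext i; exact (hT i).1
    · rw [← E.symm.map_top]; congr; funext i; exact (hT i).2.1
  · intro c hc
    simp only [Set.Finite.mem_toFinset, Set.mem_ofPred_eq] at hc
    rw [prod_comm]
    refine prod_congr rfl fun j _ => ?_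
    rw [hρE, hρE, ← sum_tsub_distrib _ fun i _ => E.monotone (hc.2.2 (Fin.castSucc_le_succ j)) i,
      prod_pow_eq_pow_sum]

end FlagPolynomial

theorem rs_labeling_flag_h_and_product_of_chains_general
    {P : Type*} [Fintype P] [PartialOrder P] [BoundedOrder P]
    (n : ℕ) (ρ : P → ℕ) (hρ : IsRankFunction n ρ)
    {L : Type*} [LinearOrder L]
    (Λ : {c : Fin (n + 1) → P // IsMaxChainOf n c} → Fin n → L)
    (hC : IsCLabeling Λ)
    (hR : IsRelLabeling ρ Λ (· ≤ ·))
    (hS : IsSLabeling Λ) :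
    ∃ l : List ℕ, l.Pairwise (· ≥ ·) ∧ (∀ m ∈ l, 0 < m) ∧ l.sum = n ∧
      (∀ d : ℕ, flagPoly (P := P) ρ d = (l.map (hsymm (Fin d) ℚ)).prod) ∧
      Nonempty (P ≃o ∀ i : Fin l.length, Fin (l.get i + 1)) := by
  classical
  obtain ⟨E₁, hE₁⟩ := RSLabeling.exists_orderIso_submultisets hρ hC hR hS
  obtain ⟨l, hsorted, hpos, hsum, E₂, hE₂⟩ :=
    (RSLabeling.labelMultiset Λ ρ ⊤).exists_partition_orderIso_pi_fin
  have hrank : ∀ x, ρ x = ∑ i, (E₂ (E₁ x) i : ℕ) := fun x => by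
    rw [hE₂, hE₁, RSLabeling.card_labelMultiset hρ hR]
  refine ⟨l, hsorted, hpos, by rw [hsum, RSLabeling.card_labelMultiset hρ hR, hρ.2.1],
    fun d => ?_, ⟨E₁.trans E₂⟩⟩
  rw [flagPoly_eq_prod_hsymm ρ l.get (E₁.trans E₂) hrank, ← Fin.prod_univ_fun_getElem]
  rfl

/-- **Simion–Stanley Theorem 4.4(a).** Let `P` be a flag-symmetric finite ranked poset of
rank `n` with an `RS`-labeling `Λ` (a `C`-labeling which is both an `R`-labeling and an
`S`-labeling).  Then `F_P = h_ν` for some partition `ν` of `n` (below encoded as a sorted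
list of positive parts summing to `n`), and `P ≅ C_{ν₁+1} × C_{ν₂+1} × ⋯`. -/
theorem rs_labeling_flag_h_and_product_of_chains
    {P : Type*} [Fintype P] [PartialOrder P] [BoundedOrder P]
    (n : ℕ) (ρ : P → ℕ) (hρ : IsRankFunction n ρ)
    (hflag : ∀ d : ℕ, (flagPoly (P := P) ρ d).IsSymmetric)
    {L : Type*} [LinearOrder L]
    (Λ : {c : Fin (n + 1) → P // IsMaxChainOf n c} → Fin n → L)
    (hC : IsCLabeling Λ)
    (hR : IsRelLabeling ρ Λ (· ≤ ·))
    (hS : IsSLabeling Λ) :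
    ∃ l : List ℕ, l.Pairwise (· ≥ ·) ∧ (∀ m ∈ l, 0 < m) ∧ l.sum = n ∧
      (∀ d : ℕ, flagPoly (P := P) ρ d = (l.map (hsymm (Fin d) ℚ)).prod) ∧
      Nonempty (P ≃o ∀ i : Fin l.length, Fin (l.get i + 1)) :=
  rs_labeling_flag_h_and_product_of_chains_general n ρ hρ Λ hC hR hS
end
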